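/- arXiv:1702.05468 — 3 statements merged into one kernel-verified Lean document; each statement's English description precedes it below -/
import Mathlib

section
/- (Corollary about moment bounds.) Consider a reaction network on S ⊆ ℕⁿ with rational propensities a_j = s_j/o and let d ≥ d_o. For a polynomial f of degree at most d with coefficient vector 𝐟, define l_f^d := inf{𝐟ᵀy : y ∈ 𝓔^d} and u_f^d := sup{𝐟ᵀy : y ∈ 𝓔^d}. Then for every stationary solution π of the CME with finite rational moments of order up to d+1, one has l_f^d ≤ ⟨f/o⟩ ≤ u_f^d. Moreover these bounds are monotone in d: l_f^d ≤ l_f^{d+1} ≤ … ≤ ⟨f/o⟩ ≤ … ≤ u_f^{d+1} ≤ u_f^d, whenever π has finite rational moments of the corresponding orders. -/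
/-!
The vector of rational moments `z_β = ⟨x^β / o⟩` of a stationary solution `π` lies in every
spectrahedron `𝓔^k` (with `d_o ≤ k` and moments of order `k + 1` finite), and `𝐟ᵀz = ⟨f / o⟩`.
Through the Riesz functional `L_z(p) = ∑_β p_β z_β = ⟨p / o⟩` every constraint of `𝓔^k`
becomes a statement about `π`: the normalisation is `⟨o / o⟩ = 1`, the localising conditions
are `⟨g² x^δ / o⟩ ≥ 0`, and the moment equations are `⟨𝒜 x^α⟩ = 0` for the generator `𝒜`
of the chain. The latter comes from stationarity by exchanging the order of summation in the
nonnegative double series `∑_{x ≠ y} π(x) q(x, y) y^α`. Monotonicity in `k` is the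
inclusion `𝓔^(k+1) ⊆ 𝓔^k`.
-/

open MvPolynomial

/-- The rational moment `z_β = ⟨x^β / o⟩` of `π` w.r.t. the denominator polynomial `o`. -/
noncomputable def ratMoment {n : ℕ} (o : MvPolynomial (Fin n) ℝ)
    (π : (Fin n → ℕ) → ℝ) (β : Fin n →₀ ℕ) : ℝ :=
  ∑' x : Fin n → ℕ, (∏ i, (x i : ℝ) ^ β i) / eval (fun i => (x i : ℝ)) o * π x

/-- `π` has finite rational moments `⟨x^β / o⟩` for all multi-indices `β` with `|β| ≤ d`. -/
def HasRatMoments {n : ℕ} (o : MvPolynomial (Fin n) ℝ)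
    (π : (Fin n → ℕ) → ℝ) (d : ℕ) : Prop :=
  ∀ β : Fin n →₀ ℕ, (∑ i, β i) ≤ d →
    Summable (fun x : Fin n → ℕ =>
      (∏ i, (x i : ℝ) ^ β i) / eval (fun i => (x i : ℝ)) o * π x)

/-- The polynomial `x ↦ ∑ⱼ sⱼ(x) ((x + vⱼ)^α - x^α)` appearing in the `α`-moment
equation. -/
noncomputable def momentPoly {n m : ℕ} (v : Fin m → Fin n → ℤ)
    (s : Fin m → MvPolynomial (Fin n) ℝ) (α : Fin n →₀ ℕ) : MvPolynomial (Fin n) ℝ :=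
  ∑ j, s j * ((∏ i, (X i + C ((v j i : ℝ))) ^ α i) -
    ∏ i, (X i : MvPolynomial (Fin n) ℝ) ^ α i)

/-- The spectrahedron `𝓔^d`: vectors `y = (y_β)` satisfying the normalisation
`yᵀ𝐨 = 1`, the moment equations `yᵀ𝐠_α = 0` for `|α| ≤ d - d_a + 1`, and positive
semidefiniteness of the localising matrices `M_d⁰(y), …, M_dⁿ(y)` (expressed via their
quadratic forms on coefficient vectors of polynomials of the appropriate degrees). -/
def spectrahedron {n m : ℕ} (v : Fin m → Fin n → ℤ) (s : Fin m → MvPolynomial (Fin n) ℝ)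
    (o : MvPolynomial (Fin n) ℝ) (da d : ℕ) : Set ((Fin n →₀ ℕ) → ℝ) :=
  {y | (∑ β ∈ o.support, coeff β o * y β = 1) ∧
    (∀ α : Fin n →₀ ℕ, ((∑ i, (α i : ℤ)) ≤ (d : ℤ) - (da : ℤ) + 1) →
      ∑ β ∈ (momentPoly v s α).support, coeff β (momentPoly v s α) * y β = 0) ∧
    (∀ g : MvPolynomial (Fin n) ℝ, g.totalDegree ≤ d / 2 →
      0 ≤ ∑ α ∈ g.support, ∑ β ∈ g.support, coeff α g * coeff β g * y (α + β)) ∧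
    (∀ i₀ : Fin n, ∀ g : MvPolynomial (Fin n) ℝ, g.totalDegree ≤ (d - 1) / 2 →
      0 ≤ ∑ α ∈ g.support, ∑ β ∈ g.support,
        coeff α g * coeff β g * y (α + β + Finsupp.single i₀ 1))}

section

variable {n m : ℕ}

noncomputable def riesz (y : (Fin n →₀ ℕ) → ℝ) : MvPolynomial (Fin n) ℝ →ₗ[ℝ] ℝ :=
  (basisMonomials (Fin n) ℝ).constr ℝ y

theorem riesz_monomial (y : (Fin n →₀ ℕ) → ℝ) (β : Fin n →₀ ℕ) (c : ℝ) :
    riesz y (monomial β c) = c * y β := by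
  have h : monomial β c = c • basisMonomials (Fin n) ℝ β := by
    rw [coe_basisMonomials, smul_monomial, smul_eq_mul, mul_one]
  rw [h, map_smul, riesz, Module.Basis.constr_basis, smul_eq_mul]

theorem riesz_apply (y : (Fin n →₀ ℕ) → ℝ) (p : MvPolynomial (Fin n) ℝ) :
    riesz y p = ∑ β ∈ p.support, coeff β p * y β := by
  conv_lhs => rw [p.as_sum]
  simp only [map_sum, riesz_monomial]

theorem riesz_mul_mul_monomial (y : (Fin n →₀ ℕ) → ℝ) (g : MvPolynomial (Fin n) ℝ)
    (δ : Fin n →₀ ℕ) :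
    riesz y (g * g * monomial δ 1) =
      ∑ α ∈ g.support, ∑ β ∈ g.support, coeff α g * coeff β g * y (α + β + δ) := by
  conv_lhs => rw [g.as_sum, Finset.sum_mul_sum, Finset.sum_mul]
  simp only [Finset.sum_mul, map_sum, monomial_mul, mul_one, riesz_monomial]

theorem sum_le_totalDegree {p : MvPolynomial (Fin n) ℝ} {β : Fin n →₀ ℕ}
    (h : β ∈ p.support) : ∑ i, β i ≤ p.totalDegree := by
  rw [← Finsupp.degree_eq_sum]; exact le_totalDegree h

noncomputable def ratExpect (o : MvPolynomial (Fin n) ℝ) (π : (Fin n → ℕ) → ℝ)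
    (p : MvPolynomial (Fin n) ℝ) : ℝ :=
  ∑' x : Fin n → ℕ, eval (fun i => (x i : ℝ)) p / eval (fun i => (x i : ℝ)) o * π x

section RatMoments

variable {o : MvPolynomial (Fin n) ℝ} {π : (Fin n → ℕ) → ℝ} {D : ℕ}

theorem eval_div_mul_eq_sum (p : MvPolynomial (Fin n) ℝ) (x : Fin n → ℕ) :
    eval (fun i => (x i : ℝ)) p / eval (fun i => (x i : ℝ)) o * π x =
      ∑ β ∈ p.support, coeff β p *
        ((∏ i, (x i : ℝ) ^ β i) / eval (fun i => (x i : ℝ)) o * π x) := by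
  rw [eval_eq', Finset.sum_div, Finset.sum_mul]
  exact Finset.sum_congr rfl fun β _ => by ring

theorem HasRatMoments.hasSum_riesz (hm : HasRatMoments o π D)
    {p : MvPolynomial (Fin n) ℝ} (hp : p.totalDegree ≤ D) :
    HasSum (fun x : Fin n → ℕ =>
        eval (fun i => (x i : ℝ)) p / eval (fun i => (x i : ℝ)) o * π x)
      (riesz (ratMoment o π) p) := by
  simp_rw [eval_div_mul_eq_sum, riesz_apply]
  exact hasSum_sum fun β hβ =>
    ((hm β ((sum_le_totalDegree hβ).trans hp)).hasSum).mul_left _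

theorem HasRatMoments.summable (hm : HasRatMoments o π D)
    {p : MvPolynomial (Fin n) ℝ} (hp : p.totalDegree ≤ D) :
    Summable (fun x : Fin n → ℕ =>
      eval (fun i => (x i : ℝ)) p / eval (fun i => (x i : ℝ)) o * π x) :=
  (hm.hasSum_riesz hp).summable

theorem HasRatMoments.riesz_ratMoment (hm : HasRatMoments o π D)
    {p : MvPolynomial (Fin n) ℝ} (hp : p.totalDegree ≤ D) :
    riesz (ratMoment o π) p = ratExpect o π p :=
  (hm.hasSum_riesz hp).tsum_eq.symm

end RatMoments

theorem tsum_eq_tsum_of_hasSum_rows_cols {X Y : Type*} {F : X → Y → ℝ} (hF : ∀ x y, 0 ≤ F x y)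
    {r : X → ℝ} {c : Y → ℝ} (hr : ∀ x, HasSum (F x) (r x)) (hr_sum : Summable r)
    (hc : ∀ y, HasSum (fun x => F x y) (c y)) :
    ∑' x, r x = ∑' y, c y := by
  have hF_sum : Summable (Function.uncurry F) :=
    (summable_prod_of_nonneg fun p => hF p.1 p.2).2
      ⟨fun x => (hr x).summable, hr_sum.congr fun x => (hr x).tsum_eq.symm⟩
  calc ∑' x, r x = ∑' x, ∑' y, F x y := tsum_congr fun x => (hr x).tsum_eq.symm
    _ = ∑' y, ∑' x, F x y := hF_sum.tsum_comm.symm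
    _ = ∑' y, c y := tsum_congr fun y => (hc y).tsum_eq

structure IsStationaryCME (S : Set (Fin n → ℕ)) (v : Fin m → Fin n → ℤ)
    (a : Fin m → (Fin n → ℕ) → ℝ) (q : (Fin n → ℕ) → (Fin n → ℕ) → ℝ)
    (π : (Fin n → ℕ) → ℝ) : Prop where
  propensity_nonneg : ∀ j, ∀ x ∈ S, 0 ≤ a j x
  closed : ∀ x ∈ S, ∀ j, a j x ≠ 0 → ∃ y ∈ S, ∀ i, (y i : ℤ) = (x i : ℤ) + v j i
  rate_offDiag : ∀ x y, y ≠ x →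
    q x y = ∑ j ∈ Finset.univ.filter (fun j => ∀ i, (y i : ℤ) = (x i : ℤ) + v j i), a j x
  rate_diag : ∀ x, q x x = -∑ j, a j x
  nonneg : ∀ x, 0 ≤ π x
  eq_zero_of_notMem : ∀ x ∉ S, π x = 0
  stationary : ∀ x ∈ S, HasSum (fun y => π y * q y x) 0

namespace IsStationaryCME

variable {S : Set (Fin n → ℕ)} {v : Fin m → Fin n → ℤ}
  {a : Fin m → (Fin n → ℕ) → ℝ} {q : (Fin n → ℕ) → (Fin n → ℕ) → ℝ}
  {π : (Fin n → ℕ) → ℝ}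

theorem mem_of_ne_zero (h : IsStationaryCME S v a q π) {x : Fin n → ℕ} (hx : π x ≠ 0) :
    x ∈ S :=
  not_imp_comm.1 (h.eq_zero_of_notMem x) hx

theorem mul_propensity_nonneg (h : IsStationaryCME S v a q π) (j : Fin m) (x : Fin n → ℕ) :
    0 ≤ π x * a j x := by
  rcases eq_or_ne (π x) 0 with hx | hx
  · rw [hx, zero_mul]
  · exact mul_nonneg (h.nonneg x) (h.propensity_nonneg j x (h.mem_of_ne_zero hx))

theorem mul_rate_nonneg (h : IsStationaryCME S v a q π) {x y : Fin n → ℕ} (hxy : y ≠ x) :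
    0 ≤ π x * q x y := by
  rw [h.rate_offDiag x y hxy, Finset.mul_sum]
  exact Finset.sum_nonneg fun j _ => h.mul_propensity_nonneg j x

theorem mul_rate_eq_zero_of_notMem (h : IsStationaryCME S v a q π) (x : Fin n → ℕ)
    {y : Fin n → ℕ} (hy : y ∉ S) : π x * q x y = 0 := by
  rcases eq_or_ne y x with rfl | hxy
  · rw [h.eq_zero_of_notMem y hy, zero_mul]
  rcases eq_or_ne (π x) 0 with hx | hx
  · rw [hx, zero_mul]
  refine mul_eq_zero_of_right _ ((h.rate_offDiag x y hxy).trans (Finset.sum_eq_zero ?_))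
  intro j hj
  by_contra hne
  obtain ⟨y', hy'S, hy'⟩ := h.closed x (h.mem_of_ne_zero hx) j hne
  have : y' = y := funext fun i => by
    have := (Finset.mem_filter.1 hj).2 i; have := hy' i; omega
  exact hy (this ▸ hy'S)

theorem hasSum_inflow (h : IsStationaryCME S v a q π) (y : Fin n → ℕ) :
    HasSum (fun x => π x * q x y) 0 := by
  by_cases hy : y ∈ S
  · exact h.stationary y hy
  · simpa only [h.mul_rate_eq_zero_of_notMem _ hy] using hasSum_zero

theorem hasSum_offDiag_inflow (h : IsStationaryCME S v a q π) (Φ : (Fin n → ℝ) → ℝ)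
    (y : Fin n → ℕ) :
    HasSum (fun x => if y = x then 0 else π x * q x y * Φ (fun i => (y i : ℝ)))
      (π y * (∑ j, a j y) * Φ (fun i => (y i : ℝ))) := by
  classical
  have h_eq : (fun x => if y = x then 0 else π x * q x y * Φ (fun i => (y i : ℝ))) =
      Function.update (fun x => π x * q x y * Φ (fun i => (y i : ℝ))) y 0 := by
    funext x
    rcases eq_or_ne x y with rfl | hxy
    · simp
    · simp [Function.update_of_ne hxy, Ne.symm hxy]
  have h_val : π y * (∑ j, a j y) * Φ (fun i => (y i : ℝ)) =
      0 - π y * q y y * Φ (fun i => (y i : ℝ)) + 0 * Φ (fun i => (y i : ℝ)) := by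
    rw [h.rate_diag]; ring
  rw [h_eq, h_val]
  exact ((h.hasSum_inflow y).mul_right _).update y 0

theorem hasSum_jump (h : IsStationaryCME S v a q π) (Φ : (Fin n → ℝ) → ℝ)
    (x : Fin n → ℕ) (j : Fin m) :
    HasSum (fun y => if y ≠ x ∧ ∀ i, (y i : ℤ) = (x i : ℤ) + v j i
        then π x * a j x * Φ (fun i => (y i : ℝ)) else 0)
      (if v j = 0 then 0 else π x * a j x * Φ (fun i => (x i : ℝ) + v j i)) := by
  by_cases hπa : π x * a j x = 0
  · simpa only [hπa, zero_mul, ite_self] using hasSum_zero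
  have hx : x ∈ S := h.mem_of_ne_zero (left_ne_zero_of_mul hπa)
  obtain ⟨y₀, -, hy₀⟩ := h.closed x hx j (right_ne_zero_of_mul hπa)
  have h_target : ∀ y : Fin n → ℕ, (∀ i, (y i : ℤ) = (x i : ℤ) + v j i) → y = y₀ :=
    fun y hy => funext fun i => by have := hy i; have := hy₀ i; omega
  by_cases hv : v j = 0
  · have hy₀x : y₀ = x := funext fun i => by have := hy₀ i; simp [hv] at this; omega
    rw [if_pos hv]
    convert hasSum_zero with y
    rw [if_neg]
    rintro ⟨hyx, hy⟩
    exact hyx ((h_target y hy).trans hy₀x)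
  · have hy₀x : y₀ ≠ x := by
      rintro rfl
      exact hv (funext fun i => by have := hy₀ i; simp only [Pi.zero_apply]; omega)
    have hΦ : Φ (fun i => (y₀ i : ℝ)) = Φ (fun i => (x i : ℝ) + v j i) := by
      congr 1; funext i; exact_mod_cast hy₀ i
    rw [if_neg hv, ← hΦ]
    convert hasSum_single (f := fun y => if y ≠ x ∧ ∀ i, (y i : ℤ) = (x i : ℤ) + v j i
        then π x * a j x * Φ (fun i => (y i : ℝ)) else 0) y₀ ?_ using 1
    · rw [if_pos ⟨hy₀x, hy₀⟩]
    · intro y hy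
      exact if_neg fun hcond => hy (h_target y hcond.2)

theorem hasSum_offDiag_outflow (h : IsStationaryCME S v a q π) (Φ : (Fin n → ℝ) → ℝ)
    (x : Fin n → ℕ) :
    HasSum (fun y => if y = x then 0 else π x * q x y * Φ (fun i => (y i : ℝ)))
      (∑ j, if v j = 0 then 0 else π x * a j x * Φ (fun i => (x i : ℝ) + v j i)) := by
  convert hasSum_sum fun j _ => h.hasSum_jump Φ x j with y
  rcases eq_or_ne y x with rfl | hyx
  · simp
  · rw [if_neg hyx, h.rate_offDiag x y hyx, Finset.mul_sum, Finset.sum_mul, Finset.sum_filter]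
    simp only [hyx, ne_eq, not_false_eq_true, true_and]

theorem tsum_jump_eq (h : IsStationaryCME S v a q π) (Φ : (Fin n → ℝ) → ℝ)
    (hΦ : ∀ y : Fin n → ℕ, 0 ≤ Φ (fun i => (y i : ℝ)))
    (hsum : ∀ j, Summable (fun x => π x * a j x * Φ (fun i => (x i : ℝ) + v j i))) :
    ∑' x, ∑ j, (if v j = 0 then 0 else π x * a j x * Φ (fun i => (x i : ℝ) + v j i)) =
      ∑' x, π x * (∑ j, a j x) * Φ (fun i => (x i : ℝ)) := by
  refine tsum_eq_tsum_of_hasSum_rows_cols (fun x y => ?_) (h.hasSum_offDiag_outflow Φ)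
    (summable_sum fun j _ => ?_) (h.hasSum_offDiag_inflow Φ)
  · split_ifs with hxy
    · exact le_rfl
    · exact mul_nonneg (h.mul_rate_nonneg hxy) (hΦ y)
  · split_ifs
    · exact summable_zero
    · exact hsum j

/-- Reactions with `v j = 0` enter the diagonal rate `q x x` but no off-diagonal one, so
stationarity forces them to carry no probability flux. -/
theorem mul_propensity_eq_zero_of_null (h : IsStationaryCME S v a q π)
    (hsum : ∀ j, Summable (fun x => π x * a j x)) {j : Fin m} (hv : v j = 0) (x : Fin n → ℕ) :
    π x * a j x = 0 := by
  set N : (Fin n → ℕ) → ℝ := fun x => ∑ j, if v j = 0 then π x * a j x else 0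
  have hN_terms : ∀ x j, 0 ≤ if v j = 0 then π x * a j x else 0 := fun x j => by
    split_ifs
    exacts [h.mul_propensity_nonneg j x, le_rfl]
  have hN_nonneg : ∀ x, 0 ≤ N x := fun x => Finset.sum_nonneg fun j _ => hN_terms x j
  have h_split : ∀ x, π x * (∑ j, a j x) * 1 =
      (∑ j, if v j = 0 then 0 else π x * a j x * 1) + N x := fun x => by
    rw [← Finset.sum_add_distrib, Finset.mul_sum, Finset.sum_mul]
    exact Finset.sum_congr rfl fun j _ => by split_ifs <;> ring
  have h_jump_sum : Summable (fun x => ∑ j, if v j = 0 then 0 else π x * a j x * 1) :=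
    summable_sum fun j _ => by split_ifs <;> simp [hsum j]
  have hN_sum : Summable N :=
    summable_sum fun j _ => by split_ifs <;> simp [hsum j]
  have h_bal := h.tsum_jump_eq (fun _ => 1) (fun _ => zero_le_one)
    (fun j => by simpa using hsum j)
  rw [tsum_congr h_split, h_jump_sum.tsum_add hN_sum] at h_bal
  have hN_zero : N = 0 :=
    (hasSum_zero_iff_of_nonneg hN_nonneg).1 ((by linarith : ∑' x, N x = 0) ▸ hN_sum.hasSum)
  have h_term := (Finset.sum_eq_zero_iff_of_nonneg fun j _ => hN_terms x j).1
    (congrFun hN_zero x) j (Finset.mem_univ j)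
  rwa [if_pos hv] at h_term

theorem tsum_generator_eq_zero (h : IsStationaryCME S v a q π) (Φ : (Fin n → ℝ) → ℝ)
    (hΦ : ∀ y : Fin n → ℕ, 0 ≤ Φ (fun i => (y i : ℝ)))
    (hsum : ∀ j, Summable (fun x => π x * a j x))
    (hsum_jump : ∀ j, Summable (fun x => π x * a j x * Φ (fun i => (x i : ℝ) + v j i)))
    (hsum_stay : ∀ j, Summable (fun x => π x * a j x * Φ (fun i => (x i : ℝ)))) :
    ∑' x, ∑ j, π x * a j x * (Φ (fun i => (x i : ℝ) + v j i) - Φ (fun i => (x i : ℝ))) = 0 := by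
  have h_null : ∀ x j, (if v j = 0 then 0 else π x * a j x * Φ (fun i => (x i : ℝ) + v j i)) =
      π x * a j x * Φ (fun i => (x i : ℝ) + v j i) := fun x j => by
    split_ifs with hv
    · rw [h.mul_propensity_eq_zero_of_null hsum hv x, zero_mul]
    · rfl
  have h_bal := h.tsum_jump_eq Φ hΦ hsum_jump
  simp only [h_null, Finset.mul_sum, Finset.sum_mul] at h_bal
  simp only [mul_sub, Finset.sum_sub_distrib]
  rw [(summable_sum fun j _ => hsum_jump j).tsum_sub (summable_sum fun j _ => hsum_stay j),
    h_bal, sub_self]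

end IsStationaryCME

theorem totalDegree_prod_pow_le (f : Fin n → MvPolynomial (Fin n) ℝ)
    (hf : ∀ i, (f i).totalDegree ≤ 1) (α : Fin n →₀ ℕ) :
    (∏ i, f i ^ α i).totalDegree ≤ ∑ i, α i :=
  (totalDegree_finsetProd _ _).trans <| Finset.sum_le_sum fun i _ =>
    (totalDegree_pow _ _).trans (by simpa using Nat.mul_le_mul_left (α i) (hf i))

theorem totalDegree_X_add_C_le (i : Fin n) (c : ℝ) :
    (X i + C c : MvPolynomial (Fin n) ℝ).totalDegree ≤ 1 :=
  (totalDegree_add _ _).trans (by simp)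

theorem totalDegree_momentPoly_le (v : Fin m → Fin n → ℤ)
    (s : Fin m → MvPolynomial (Fin n) ℝ) {da : ℕ} (hda : ∀ j, (s j).totalDegree ≤ da)
    (α : Fin n →₀ ℕ) : (momentPoly v s α).totalDegree ≤ da + ∑ i, α i :=
  (totalDegree_finsetSum _ _).trans <| Finset.sup_le fun j _ =>
    (totalDegree_mul _ _).trans <| add_le_add (hda j) <| (totalDegree_sub _ _).trans <|
      max_le (totalDegree_prod_pow_le _ (fun i => totalDegree_X_add_C_le i _) α)
        (totalDegree_prod_pow_le _ (fun i => (totalDegree_X i).le) α)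

section RationalPropensities

variable {s : Fin m → MvPolynomial (Fin n) ℝ} {o : MvPolynomial (Fin n) ℝ}
  {a : Fin m → (Fin n → ℕ) → ℝ} {π : (Fin n → ℕ) → ℝ} {D : ℕ}

theorem HasRatMoments.summable_mul_propensity (hm : HasRatMoments o π D)
    (ha : ∀ j x, a j x = eval (fun i => (x i : ℝ)) (s j) / eval (fun i => (x i : ℝ)) o)
    (j : Fin m) {p : MvPolynomial (Fin n) ℝ} (hp : (s j * p).totalDegree ≤ D) :
    Summable (fun x => π x * a j x * eval (fun i => (x i : ℝ)) p) :=
  (hm.summable hp).congr fun x => by rw [map_mul, ha]; ring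

theorem ratExpect_momentPoly_eq_zero {S : Set (Fin n → ℕ)} {v : Fin m → Fin n → ℤ}
    {q : (Fin n → ℕ) → (Fin n → ℕ) → ℝ} (h : IsStationaryCME S v a q π)
    (ha : ∀ j x, a j x = eval (fun i => (x i : ℝ)) (s j) / eval (fun i => (x i : ℝ)) o)
    {da : ℕ} (hda : ∀ j, (s j).totalDegree ≤ da) (hm : HasRatMoments o π D)
    (α : Fin n →₀ ℕ) (hdeg : da + ∑ i, α i ≤ D) :
    ratExpect o π (momentPoly v s α) = 0 := by
  have hsum : ∀ j {p : MvPolynomial (Fin n) ℝ}, p.totalDegree ≤ ∑ i, α i →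
      Summable (fun x => π x * a j x * eval (fun i => (x i : ℝ)) p) := fun j p hp =>
    hm.summable_mul_propensity ha j
      ((totalDegree_mul _ _).trans ((add_le_add (hda j) hp).trans hdeg))
  have h_gen := h.tsum_generator_eq_zero (fun z => ∏ i, z i ^ α i)
    (fun y => Finset.prod_nonneg fun i _ => by positivity)
    (fun j => by simpa using hsum j (p := 1) (by simp))
    (fun j => by simpa using hsum j (totalDegree_prod_pow_le _
      (fun i => totalDegree_X_add_C_le i (v j i : ℝ)) α))
    (fun j => by simpa using hsum j (totalDegree_prod_pow_le _ (fun i => (totalDegree_X i).le) α))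
  rw [← h_gen, ratExpect]
  refine tsum_congr fun x => ?_
  simp only [momentPoly, map_sum, map_mul, map_sub, map_prod, map_pow, eval_X, eval_C, map_add,
    Finset.sum_div, Finset.sum_mul, ha]
  exact Finset.sum_congr rfl fun j _ => by ring

end RationalPropensities

section Spectrahedron

variable {o : MvPolynomial (Fin n) ℝ} {π : (Fin n → ℕ) → ℝ}

theorem ratExpect_self (ho : ∀ x, π x ≠ 0 → eval (fun i => (x i : ℝ)) o ≠ 0)
    (hπ_mass : HasSum π 1) : ratExpect o π o = 1 := by
  refine (tsum_congr fun x => ?_).trans hπ_mass.tsum_eq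
  rcases eq_or_ne (π x) 0 with hx | hx
  · rw [hx, mul_zero]
  · rw [div_self (ho x hx), one_mul]

theorem ratExpect_nonneg (hπ_nonneg : ∀ x, 0 ≤ π x)
    (ho : ∀ x, π x ≠ 0 → 0 < eval (fun i => (x i : ℝ)) o) {p : MvPolynomial (Fin n) ℝ}
    (hp : ∀ x : Fin n → ℕ, 0 ≤ eval (fun i => (x i : ℝ)) p) : 0 ≤ ratExpect o π p := by
  refine tsum_nonneg fun x => ?_
  rcases eq_or_ne (π x) 0 with hx | hx
  · rw [hx, mul_zero]
  · exact mul_nonneg (div_nonneg (hp x) (ho x hx).le) (hπ_nonneg x)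

theorem eval_mul_self_mul_monomial_nonneg (g : MvPolynomial (Fin n) ℝ) (δ : Fin n →₀ ℕ)
    (x : Fin n → ℕ) : 0 ≤ eval (fun i => (x i : ℝ)) (g * g * monomial δ 1) := by
  rw [map_mul, map_mul, eval_monomial, one_mul]
  exact mul_nonneg (mul_self_nonneg _) (Finset.prod_nonneg fun i _ => by positivity)

theorem totalDegree_mul_self_mul_monomial_le (g : MvPolynomial (Fin n) ℝ) (δ : Fin n →₀ ℕ) :
    (g * g * monomial δ (1 : ℝ)).totalDegree ≤ 2 * g.totalDegree + ∑ i, δ i := by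
  refine (totalDegree_mul _ _).trans (add_le_add ((totalDegree_mul _ _).trans (by omega)) ?_)
  rw [← Finsupp.degree_eq_sum]
  exact totalDegree_monomial_le _ _

theorem HasRatMoments.localizing_nonneg {D : ℕ} (hm : HasRatMoments o π D)
    (hπ_nonneg : ∀ x, 0 ≤ π x) (ho : ∀ x, π x ≠ 0 → 0 < eval (fun i => (x i : ℝ)) o)
    (g : MvPolynomial (Fin n) ℝ) (δ : Fin n →₀ ℕ) (hdeg : 2 * g.totalDegree + ∑ i, δ i ≤ D) :
    0 ≤ ∑ α ∈ g.support, ∑ β ∈ g.support,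
      coeff α g * coeff β g * ratMoment o π (α + β + δ) := by
  rw [← riesz_mul_mul_monomial,
    hm.riesz_ratMoment ((totalDegree_mul_self_mul_monomial_le g δ).trans hdeg)]
  exact ratExpect_nonneg hπ_nonneg ho (eval_mul_self_mul_monomial_nonneg g δ)

theorem ratMoment_mem_spectrahedron {S : Set (Fin n → ℕ)} {v : Fin m → Fin n → ℤ}
    {s : Fin m → MvPolynomial (Fin n) ℝ} {a : Fin m → (Fin n → ℕ) → ℝ}
    {q : (Fin n → ℕ) → (Fin n → ℕ) → ℝ} (h : IsStationaryCME S v a q π)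
    (ha : ∀ j x, a j x = eval (fun i => (x i : ℝ)) (s j) / eval (fun i => (x i : ℝ)) o)
    {da : ℕ} (hda : ∀ j, (s j).totalDegree ≤ da)
    (ho : ∀ x, π x ≠ 0 → 0 < eval (fun i => (x i : ℝ)) o) (hπ_mass : HasSum π 1)
    {k : ℕ} (hdo : o.totalDegree ≤ k) (hm : HasRatMoments o π (k + 1)) :
    ratMoment o π ∈ spectrahedron v s o da k := by
  refine ⟨?_, fun α hα => ?_, fun g hg => ?_, fun i₀ g hg => ?_⟩
  · rw [← riesz_apply, hm.riesz_ratMoment (hdo.trans k.le_succ)]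
    exact ratExpect_self (fun x hx => (ho x hx).ne') hπ_mass
  · have hdeg : da + ∑ i, α i ≤ k + 1 := by rw [← Nat.cast_sum] at hα; omega
    rw [← riesz_apply, hm.riesz_ratMoment ((totalDegree_momentPoly_le v s hda α).trans hdeg)]
    exact ratExpect_momentPoly_eq_zero h ha hda hm α hdeg
  · simpa using hm.localizing_nonneg h.nonneg ho g 0 (by simp; omega)
  · exact hm.localizing_nonneg h.nonneg ho g (Finsupp.single i₀ 1) (by simp; omega)

theorem spectrahedron_succ_subset (v : Fin m → Fin n → ℤ) (s : Fin m → MvPolynomial (Fin n) ℝ)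
    (o : MvPolynomial (Fin n) ℝ) (da k : ℕ) :
    spectrahedron v s o da (k + 1) ⊆ spectrahedron v s o da k := by
  rintro y ⟨h_norm, h_eq, h_psd, h_loc⟩
  exact ⟨h_norm, fun α hα => h_eq α (by push_cast at hα ⊢; omega),
    fun g hg => h_psd g (hg.trans (Nat.div_le_div_right k.le_succ)),
    fun i₀ g hg => h_loc i₀ g (hg.trans (Nat.div_le_div_right (by omega)))⟩

end Spectrahedron

end

/-- **Statement 5** (corollary about moment bounds).  For a reaction network on
`S ⊆ ℕⁿ` with rational propensities `aⱼ = sⱼ/o`, `d ≥ d_o`, and a polynomial `f` of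
degree at most `d` with coefficient vector `𝐟`, define
`l_f^d = inf {𝐟ᵀy : y ∈ 𝓔^d}` and `u_f^d = sup {𝐟ᵀy : y ∈ 𝓔^d}` (as extended reals).
Then for every stationary solution `π` of the CME with finite rational moments of order
up to `d+1` one has `l_f^d ≤ ⟨f/o⟩ ≤ u_f^d`; moreover the bounds are monotone,
`l_f^{d'} ≤ l_f^{d'+1} ≤ ⟨f/o⟩ ≤ u_f^{d'+1} ≤ u_f^{d'}` for all `d' ≥ d`, whenever `π`
has finite rational moments of the corresponding orders. -/
theorem moment_bounds_sdp
    {n m : ℕ} (S : Set (Fin n → ℕ))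
    (v : Fin m → Fin n → ℤ) (s : Fin m → MvPolynomial (Fin n) ℝ)
    (o : MvPolynomial (Fin n) ℝ) (d da : ℕ)
    (ho_pos : ∀ x ∈ S, 0 < eval (fun i => (x i : ℝ)) o)
    (hdo : o.totalDegree ≤ d)
    (hda : ∀ j, (s j).totalDegree ≤ da)
    (a : Fin m → (Fin n → ℕ) → ℝ)
    (ha : ∀ j x, a j x = eval (fun i => (x i : ℝ)) (s j) / eval (fun i => (x i : ℝ)) o)
    (ha_nonneg : ∀ j, ∀ x ∈ S, 0 ≤ a j x)
    (hclosed : ∀ x ∈ S, ∀ j, a j x ≠ 0 → ∃ y ∈ S, ∀ i, (y i : ℤ) = (x i : ℤ) + v j i)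
    (q : (Fin n → ℕ) → (Fin n → ℕ) → ℝ)
    (hq_offdiag : ∀ x y, y ≠ x →
      q x y = ∑ j ∈ Finset.univ.filter (fun j => ∀ i, (y i : ℤ) = (x i : ℤ) + v j i), a j x)
    (hq_diag : ∀ x, q x x = -∑ j, a j x)
    (π : (Fin n → ℕ) → ℝ) (hπ_nonneg : ∀ x, 0 ≤ π x) (hπ_supp : ∀ x ∉ S, π x = 0)
    (hπ_mass : HasSum π 1)
    (hπ_stat : ∀ x ∈ S, HasSum (fun y => π y * q y x) 0)
    (f : MvPolynomial (Fin n) ℝ) (hf : f.totalDegree ≤ d)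
    (hmom : HasRatMoments o π (d + 1)) :
    let L : ℕ → EReal := fun k => ⨅ y ∈ spectrahedron v s o da k,
      ((∑ β ∈ f.support, coeff β f * y β : ℝ) : EReal);
    let U : ℕ → EReal := fun k => ⨆ y ∈ spectrahedron v s o da k,
      ((∑ β ∈ f.support, coeff β f * y β : ℝ) : EReal);
    let M : EReal := ((∑' x : Fin n → ℕ,
      eval (fun i => (x i : ℝ)) f / eval (fun i => (x i : ℝ)) o * π x : ℝ) : EReal);
    (L d ≤ M ∧ M ≤ U d) ∧
      (∀ d' : ℕ, d ≤ d' → HasRatMoments o π (d' + 2) →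
        L d' ≤ L (d' + 1) ∧ L (d' + 1) ≤ M ∧ M ≤ U (d' + 1) ∧ U (d' + 1) ≤ U d') := by
  intro L U M
  have h : IsStationaryCME S v a q π :=
    ⟨ha_nonneg, hclosed, hq_offdiag, hq_diag, hπ_nonneg, hπ_supp, hπ_stat⟩
  have ho : ∀ x, π x ≠ 0 → 0 < eval (fun i => (x i : ℝ)) o :=
    fun x hx => ho_pos x (h.mem_of_ne_zero hx)
  have hmem : ∀ k, d ≤ k → HasRatMoments o π (k + 1) →
      ratMoment o π ∈ spectrahedron v s o da k := fun k hk hm =>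
    ratMoment_mem_spectrahedron h ha hda ho hπ_mass (hdo.trans hk) hm
  have hM : M = ((∑ β ∈ f.support, coeff β f * ratMoment o π β : ℝ) : EReal) := by
    rw [← riesz_apply, hmom.riesz_ratMoment (hf.trans d.le_succ)]; rfl
  have hL : ∀ k, d ≤ k → HasRatMoments o π (k + 1) → L k ≤ M := fun k hk hm =>
    hM ▸ iInf₂_le (ratMoment o π) (hmem k hk hm)
  have hU : ∀ k, d ≤ k → HasRatMoments o π (k + 1) → M ≤ U k := fun k hk hm =>
    hM ▸ le_iSup₂_of_le (ratMoment o π) (hmem k hk hm) le_rfl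
  refine ⟨⟨hL d le_rfl hmom, hU d le_rfl hmom⟩, fun d' hd' hmom' => ⟨?_, ?_, ?_, ?_⟩⟩
  · exact biInf_mono fun y hy => spectrahedron_succ_subset v s o da d' hy
  · exact hL (d' + 1) (by omega) hmom'
  · exact hU (d' + 1) (by omega) hmom'
  · exact biSup_mono fun y hy => spectrahedron_succ_subset v s o da d' hy
end

section
/- (Corollary on distribution bounds, part (i).) Let Q be a rate matrix on a countable state space S such that {z ∈ S : q(z,x) ≠ 0} is finite for every x ∈ S, let w be norm-like, and suppose P_{w,c} is non-empty. Define l^r(x) := inf{π^r(x) : π^r ∈ P^r_{w,c}} and u^r(x) := sup{π^r(x) : π^r ∈ P^r_{w,c}} for x ∈ S_r, and l^r(x) := u^r(x) := 0 for x ∉ S_r. Then for any π ∈ P_{w,c} and r ≥ 1: l^r(x) ≤ π(x) for all x ∈ S, π(x) ≤ u^r(x) for all x ∈ S_r, and the approximation errors satisfy ‖l^r − π‖ = 1 − ∑_{x∈S_r} l^r(x) and ‖u^r − π‖ = max{∑_{x∈S_r} u^r(x) − 1 + m_r, m_r} ≤ max{∑_{x∈S_r} u^r(x) − 1 + c/r,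 c/r}, where m_r := ∑_{x∉S_r} π(x). -/
open scoped Classical

open Filter

/-- The set `P_{w,c}` of stationary solutions `π` of the CME for the rate matrix `q`
(`π ≥ 0`, `∑ π = 1`, `πQ(x) = 0` for all `x`) satisfying the moment bound `⟨w⟩ ≤ c`. -/
def statSet {σ : Type*} (q : σ → σ → ℝ) (w : σ → ℝ) (c : ℝ) : Set (σ → ℝ) :=
  {π | (∀ x, 0 ≤ π x) ∧ HasSum π 1 ∧ (∀ x, HasSum (fun y => π y * q y x) 0) ∧
    Summable (fun x => w x * π x) ∧ (∑' x, w x * π x) ≤ c}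

/-- The truncation `S_r = {x : w(x) < r}`. -/
def truncSet {σ : Type*} (w : σ → ℝ) (r : ℝ) : Set σ := {x | w x < r}

/-- The set `N_r` of states of `S_r` whose stationary equation only involves states of
`S_r`. -/
def eqStates {σ : Type*} (q : σ → σ → ℝ) (w : σ → ℝ) (r : ℝ) : Set σ :=
  {x | w x < r ∧ ∀ z, q z x ≠ 0 → w z < r}

/-- The outer approximation `P^r_{w,c}`: all `π^r ≥ 0` vanishing outside `S_r` with
`π^r Q(x) = 0` for `x ∈ N_r`, `1 - c/r ≤ ∑ π^r ≤ 1` and `∑ w π^r ≤ c`. -/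
def truncPolytope {σ : Type*} (q : σ → σ → ℝ) (w : σ → ℝ) (c r : ℝ) : Set (σ → ℝ) :=
  {ρ | (∀ x, 0 ≤ ρ x) ∧ (∀ x, ¬ w x < r → ρ x = 0) ∧
    (∀ x ∈ eqStates q w r, ∑' y, ρ y * q y x = 0) ∧
    1 - c / r ≤ ∑' x, ρ x ∧ (∑' x, ρ x) ≤ 1 ∧ (∑' x, w x * ρ x) ≤ c}

/-- The total variation distance `‖ρ₁ - ρ₂‖ = sup_{A ⊆ S} |∑_{x ∈ A} (ρ₁(x) - ρ₂(x))|`. -/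
noncomputable def tvDist {σ : Type*} (ρ₁ ρ₂ : σ → ℝ) : ℝ :=
  ⨆ A : Set σ, |∑' x : A, (ρ₁ x - ρ₂ x)|

/-! The truncation of `π` to `S_r` lies in `P^r_{w,c}`: no state outside `S_r` feeds into `N_r`,
so the equations at `N_r` are those of `π`, and by Markov's inequality the lost mass
`m_r = ∑_{x ∉ S_r} π(x)` is at most `⟨w⟩/r ≤ c/r`. Hence `l^r ≤ π` everywhere and `π ≤ u^r` on
`S_r`. For a summable `f` the supremum of `|∑_{x ∈ A} f(x)|` over `A ⊆ S` is
`max (∑ f⁺) (∑ f⁻)`, attained at `A = {f ≥ 0}` or `A = {f ≤ 0}`. For `f = l^r - π ≤ 0` this is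
`∑ (π - l^r)`; for `f = u^r - π` the negative part is `π` off `S_r`, of sum `m_r`, and
`∑ f⁺ = ∑ f + ∑ f⁻ = ∑ u^r - 1 + m_r`. -/

section

variable {σ : Type*}

theorem summable_posPart {f : σ → ℝ} (hf : Summable f) : Summable fun x => (f x)⁺ :=
  hf.abs.of_nonneg_of_le (fun x => posPart_nonneg _) fun x => by
    rw [← posPart_add_negPart]; linarith [negPart_nonneg (f x)]

theorem summable_negPart {f : σ → ℝ} (hf : Summable f) : Summable fun x => (f x)⁻ :=
  hf.abs.of_nonneg_of_le (fun x => negPart_nonneg _) fun x => by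
    rw [← posPart_add_negPart]; linarith [posPart_nonneg (f x)]

theorem iSup_abs_tsum_subtype_eq_max {f : σ → ℝ} (hf : Summable f) :
    ⨆ A : Set σ, |∑' x : A, f x| = max (∑' x, (f x)⁺) (∑' x, (f x)⁻) := by
  have hpos := summable_posPart hf
  have hneg := summable_negPart hf
  have hbound (A : Set σ) : |∑' x : A, f x| ≤ max (∑' x, (f x)⁺) (∑' x, (f x)⁻) := by
    have hsplit : ∑' x : A, f x = ∑' x : A, (f x)⁺ - ∑' x : A, (f x)⁻ :=
      (tsum_congr fun x => (posPart_sub_negPart _).symm).trans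
        ((hpos.subtype A).tsum_sub (hneg.subtype A))
    have hpos_le := hpos.tsum_subtype_le _ A fun x => posPart_nonneg _
    have hneg_le := hneg.tsum_subtype_le _ A fun x => negPart_nonneg _
    have hpos_nonneg : 0 ≤ ∑' x : A, (f x)⁺ := tsum_nonneg fun x => posPart_nonneg _
    have hneg_nonneg : 0 ≤ ∑' x : A, (f x)⁻ := tsum_nonneg fun x => negPart_nonneg _
    rw [hsplit, abs_le]
    constructor <;> linarith [le_max_left (∑' x, (f x)⁺) (∑' x, (f x)⁻),
      le_max_right (∑' x, (f x)⁺) (∑' x, (f x)⁻)]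
  have hbdd : BddAbove (Set.range fun A : Set σ => |∑' x : A, f x|) :=
    ⟨_, Set.forall_mem_range.2 hbound⟩
  refine le_antisymm (ciSup_le hbound) (max_le ?_ ?_)
  · have hA : ∑' x : {x | 0 ≤ f x}, f x = ∑' x, (f x)⁺ := by
      rw [← tsum_subtype_eq_of_support_subset (s := {x | 0 ≤ f x})]
      · exact tsum_congr fun x => (posPart_eq_self.2 x.2).symm
      · intro x hx
        by_contra h
        exact hx (posPart_eq_zero.2 (not_le.1 h).le)
    calc ∑' x, (f x)⁺ = |∑' x : {x | 0 ≤ f x}, f x| := by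
          rw [hA, abs_of_nonneg (tsum_nonneg fun x => posPart_nonneg _)]
      _ ≤ _ := le_ciSup hbdd _
  · have hA : ∑' x : {x | f x ≤ 0}, f x = -∑' x, (f x)⁻ := by
      rw [← tsum_subtype_eq_of_support_subset (s := {x | f x ≤ 0}), ← tsum_neg]
      · exact tsum_congr fun x => by rw [negPart_eq_neg.2 x.2, neg_neg]
      · intro x hx
        by_contra h
        exact hx (negPart_eq_zero.2 (not_le.1 h).le)
    calc ∑' x, (f x)⁻ = |∑' x : {x | f x ≤ 0}, f x| := by
          rw [hA, abs_neg, abs_of_nonneg (tsum_nonneg fun x => negPart_nonneg _)]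
      _ ≤ _ := le_ciSup hbdd _

theorem tvDist_eq_max {ρ₁ ρ₂ : σ → ℝ} (h : Summable fun x => ρ₁ x - ρ₂ x) :
    tvDist ρ₁ ρ₂ = max (∑' x, (ρ₁ x - ρ₂ x)⁺) (∑' x, (ρ₁ x - ρ₂ x)⁻) :=
  iSup_abs_tsum_subtype_eq_max h

theorem tvDist_eq_tsum_sub_of_le {ρ₁ ρ₂ : σ → ℝ} (h₁ : Summable ρ₁) (h₂ : Summable ρ₂)
    (hle : ∀ x, ρ₁ x ≤ ρ₂ x) : tvDist ρ₁ ρ₂ = ∑' x, ρ₂ x - ∑' x, ρ₁ x := by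
  have hpos (x : σ) : (ρ₁ x - ρ₂ x)⁺ = 0 := posPart_eq_zero.2 (sub_nonpos.2 (hle x))
  have hneg (x : σ) : (ρ₁ x - ρ₂ x)⁻ = ρ₂ x - ρ₁ x := by
    rw [negPart_eq_neg.2 (sub_nonpos.2 (hle x)), neg_sub]
  rw [tvDist_eq_max (h₁.sub h₂), tsum_congr hpos, tsum_congr hneg, tsum_zero, ← h₂.tsum_sub h₁]
  exact max_eq_right (tsum_nonneg fun x => sub_nonneg.2 (hle x))

theorem tvDist_eq_max_of_le_on_of_eq_zero_off {ρ₁ ρ₂ : σ → ℝ} {S : Set σ} (h₁ : Summable ρ₁)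
    (h₂ : Summable ρ₂) (h₂_nonneg : ∀ x, 0 ≤ ρ₂ x) (hle : ∀ x ∈ S, ρ₂ x ≤ ρ₁ x)
    (hzero : ∀ x ∉ S, ρ₁ x = 0) :
    tvDist ρ₁ ρ₂ = max (∑' x, ρ₁ x - ∑' x, ρ₂ x + ∑' x : ↥Sᶜ, ρ₂ x) (∑' x : ↥Sᶜ, ρ₂ x) := by
  have hneg (x : σ) : (ρ₁ x - ρ₂ x)⁻ = Sᶜ.indicator ρ₂ x := by
    by_cases hx : x ∈ S
    · rw [Set.indicator_of_notMem (Set.notMem_compl_iff.2 hx)]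
      exact negPart_eq_zero.2 (sub_nonneg.2 (hle x hx))
    · rw [Set.indicator_of_mem hx, hzero x hx, zero_sub,
        negPart_eq_neg.2 (neg_nonpos.2 (h₂_nonneg x)), neg_neg]
  have hsum := h₁.sub h₂
  have htsum_neg : ∑' x, (ρ₁ x - ρ₂ x)⁻ = ∑' x : ↥Sᶜ, ρ₂ x := by
    rw [tsum_congr hneg, tsum_subtype]
  have htsum_pos : ∑' x, (ρ₁ x - ρ₂ x)⁺ = ∑' x, ρ₁ x - ∑' x, ρ₂ x + ∑' x : ↥Sᶜ, ρ₂ x := by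
    rw [← htsum_neg, ← h₁.tsum_sub h₂, ← hsum.tsum_add (summable_negPart hsum)]
    exact tsum_congr fun x => (sub_eq_iff_eq_add.1 (posPart_sub_negPart _))
  rw [tvDist_eq_max hsum, htsum_pos, htsum_neg]

theorem summable_of_eq_zero_of_notMem {f : σ → ℝ} {S : Set σ} (hS : S.Finite)
    (hf : ∀ x ∉ S, f x = 0) : Summable f :=
  summable_of_hasFiniteSupport (hS.subset (Function.support_subset_iff'.2 hf))

section Truncation

variable {q : σ → σ → ℝ} {w : σ → ℝ} {c r : ℝ} {π : σ → ℝ}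

noncomputable def truncLower (q : σ → σ → ℝ) (w : σ → ℝ) (c r : ℝ) : σ → ℝ :=
  (truncSet w r).indicator fun x => sInf {t : ℝ | ∃ ρ ∈ truncPolytope q w c r, t = ρ x}

noncomputable def truncUpper (q : σ → σ → ℝ) (w : σ → ℝ) (c r : ℝ) : σ → ℝ :=
  (truncSet w r).indicator fun x => sSup {t : ℝ | ∃ ρ ∈ truncPolytope q w c r, t = ρ x}

theorem mul_tsum_compl_truncSet_le (hw : ∀ x, 0 ≤ w x) (hπ_nonneg : ∀ x, 0 ≤ π x)
    (hπ : Summable π) (hwπ : Summable fun x => w x * π x) :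
    r * ∑' x : ↥(truncSet w r)ᶜ, π x ≤ ∑' x, w x * π x := by
  rw [← tsum_mul_left]
  calc ∑' x : ↥(truncSet w r)ᶜ, r * π x ≤ ∑' x : ↥(truncSet w r)ᶜ, w x * π x :=
        ((hπ.subtype _).mul_left r).tsum_le_tsum
          (fun x => mul_le_mul_of_nonneg_right (not_lt.1 x.2) (hπ_nonneg x)) (hwπ.subtype _)
    _ ≤ ∑' x, w x * π x := hwπ.tsum_subtype_le _ _ fun x => mul_nonneg (hw x) (hπ_nonneg x)

theorem tsum_compl_truncSet_le_div (hw : ∀ x, 0 ≤ w x) (hπ : π ∈ statSet q w c) (hr : 0 < r) :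
    ∑' x : ↥(truncSet w r)ᶜ, π x ≤ c / r := by
  obtain ⟨hπ_nonneg, hπ_one, -, hwπ, hwπ_le⟩ := hπ
  rw [le_div_iff₀ hr, mul_comm]
  exact (mul_tsum_compl_truncSet_le hw hπ_nonneg hπ_one.summable hwπ).trans hwπ_le

theorem indicator_truncSet_mem_truncPolytope (hw : ∀ x, 0 ≤ w x) (hπ : π ∈ statSet q w c)
    (hr : 0 < r) : (truncSet w r).indicator π ∈ truncPolytope q w c r := by
  have hmarkov := tsum_compl_truncSet_le_div hw hπ hr
  obtain ⟨hπ_nonneg, hπ_one, hπQ, hwπ, hwπ_le⟩ := hπ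
  have htsum : ∑' x, (truncSet w r).indicator π x = 1 - ∑' x : ↥(truncSet w r)ᶜ, π x := by
    rw [← tsum_subtype, eq_sub_iff_add_eq, hπ_one.summable.tsum_subtype_add_tsum_subtype_compl,
      hπ_one.tsum_eq]
  have hcompl_nonneg : 0 ≤ ∑' x : ↥(truncSet w r)ᶜ, π x := tsum_nonneg fun x => hπ_nonneg x
  have hw_le (x : σ) : w x * (truncSet w r).indicator π x ≤ w x * π x :=
    mul_le_mul_of_nonneg_left (Set.indicator_le_self' (fun y _ => hπ_nonneg y) x) (hw x)
  refine ⟨Set.indicator_nonneg fun x _ => hπ_nonneg x,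
    fun x hx => Set.indicator_of_notMem (s := truncSet w r) hx _, fun x hx => ?_,
    by linarith, by linarith, ?_⟩
  · rw [← (hπQ x).tsum_eq]
    refine tsum_congr fun y => ?_
    by_cases hy : y ∈ truncSet w r
    · rw [Set.indicator_of_mem hy]
    · have hq : q y x = 0 := not_not.1 fun h => hy (hx.2 y h)
      rw [hq, mul_zero, mul_zero]
  · refine le_trans (Summable.tsum_le_tsum hw_le ?_ hwπ) hwπ_le
    exact hwπ.of_nonneg_of_le
      (fun x => mul_nonneg (hw x) (Set.indicator_nonneg (fun y _ => hπ_nonneg y) x)) hw_le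

theorem truncPolytope_apply_le_one (hfin : (truncSet w r).Finite) {ρ : σ → ℝ}
    (hρ : ρ ∈ truncPolytope q w c r) (x : σ) : ρ x ≤ 1 :=
  ((summable_of_eq_zero_of_notMem hfin hρ.2.1).le_tsum x fun y _ => hρ.1 y).trans hρ.2.2.2.2.1

theorem truncLower_le (hw : ∀ x, 0 ≤ w x) (hπ : π ∈ statSet q w c) (hr : 0 < r) (x : σ) :
    truncLower q w c r x ≤ π x := by
  refine Set.indicator_apply_le' (fun hx => csInf_le ?_ ?_) fun _ => hπ.1 x
  · exact ⟨0, by rintro t ⟨ρ, hρ, rfl⟩; exact hρ.1 x⟩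
  · exact ⟨_, indicator_truncSet_mem_truncPolytope hw hπ hr, (Set.indicator_of_mem hx π).symm⟩

theorem le_truncUpper (hw : ∀ x, 0 ≤ w x) (hfin : (truncSet w r).Finite) (hπ : π ∈ statSet q w c)
    (hr : 0 < r) (x : σ) (hx : x ∈ truncSet w r) : π x ≤ truncUpper q w c r x := by
  rw [truncUpper, Set.indicator_of_mem hx]
  refine le_csSup ⟨1, ?_⟩ ⟨_, indicator_truncSet_mem_truncPolytope hw hπ hr,
    (Set.indicator_of_mem hx π).symm⟩
  rintro t ⟨ρ, hρ, rfl⟩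
  exact truncPolytope_apply_le_one hfin hρ x

theorem summable_truncLower (hfin : (truncSet w r).Finite) : Summable (truncLower q w c r) :=
  summable_of_eq_zero_of_notMem hfin fun _ hx => Set.indicator_of_notMem hx _

theorem summable_truncUpper (hfin : (truncSet w r).Finite) : Summable (truncUpper q w c r) :=
  summable_of_eq_zero_of_notMem hfin fun _ hx => Set.indicator_of_notMem hx _

end Truncation

end

theorem distribution_bounds_general
    {σ : Type*} (q : σ → σ → ℝ)
    (w : σ → ℝ) (hw_nonneg : ∀ x, 0 ≤ w x)
    (hw_norm : ∀ r : ℝ, (truncSet w r).Finite)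
    (c : ℝ)
    (lb ub : ℕ → σ → ℝ)
    (hlb : ∀ r : ℕ, lb r = (truncSet w (r : ℝ)).indicator fun x =>
      sInf {t : ℝ | ∃ ρ ∈ truncPolytope q w c (r : ℝ), t = ρ x})
    (hub : ∀ r : ℕ, ub r = (truncSet w (r : ℝ)).indicator fun x =>
      sSup {t : ℝ | ∃ ρ ∈ truncPolytope q w c (r : ℝ), t = ρ x})
    (π : σ → ℝ) (hπ : π ∈ statSet q w c) (r : ℕ) (hr : 1 ≤ r) :
    (∀ x, lb r x ≤ π x) ∧
    (∀ x ∈ truncSet w (r : ℝ), π x ≤ ub r x) ∧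
    tvDist (lb r) π = 1 - ∑' x, lb r x ∧
    tvDist (ub r) π =
      max ((∑' x, ub r x) - 1 + ∑' x : ↥(truncSet w (r : ℝ))ᶜ, π x)
        (∑' x : ↥(truncSet w (r : ℝ))ᶜ, π x) ∧
    tvDist (ub r) π ≤ max ((∑' x, ub r x) - 1 + c / r) (c / r) := by
  have hr0 : (0 : ℝ) < r := by exact_mod_cast hr
  have hfin := hw_norm r
  have hπ1 : ∑' x, π x = 1 := hπ.2.1.tsum_eq
  have hl : lb r = truncLower q w c r := hlb r
  have hu : ub r = truncUpper q w c r := hub r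
  have hmarkov := tsum_compl_truncSet_le_div hw_nonneg hπ hr0
  have htv_ub := tvDist_eq_max_of_le_on_of_eq_zero_off (summable_truncUpper hfin) hπ.2.1.summable
    hπ.1 (le_truncUpper hw_nonneg hfin hπ hr0) (fun x hx => Set.indicator_of_notMem hx _)
  rw [hπ1] at htv_ub
  rw [hl, hu]
  refine ⟨truncLower_le hw_nonneg hπ hr0, le_truncUpper hw_nonneg hfin hπ hr0, ?_, htv_ub, ?_⟩
  · rw [tvDist_eq_tsum_sub_of_le (summable_truncLower hfin) hπ.2.1.summable
      (truncLower_le hw_nonneg hπ hr0), hπ1]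
  · rw [htv_ub]
    exact max_le_max (by linarith) hmarkov

/-- **Statement 12** (corollary on distribution bounds, part (i)).
With `l^r(x) = inf {π^r(x) : π^r ∈ P^r_{w,c}}` and `u^r(x) = sup {π^r(x) : π^r ∈
P^r_{w,c}}` on `S_r` (and `0` outside), for any `π ∈ P_{w,c}` and `r ≥ 1`:
`l^r ≤ π` everywhere, `π ≤ u^r` on `S_r`, `‖l^r - π‖ = 1 - ∑_{x ∈ S_r} l^r(x)`, and
`‖u^r - π‖ = max (∑_{x ∈ S_r} u^r(x) - 1 + m_r) m_r ≤
 max (∑_{x ∈ S_r} u^r(x) - 1 + c/r) (c/r)` where `m_r = ∑_{x ∉ S_r} π(x)`. -/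
theorem distribution_bounds
    {σ : Type*} [Countable σ] (q : σ → σ → ℝ)
    (hq_offdiag : ∀ x y : σ, x ≠ y → 0 ≤ q x y)
    (hq_row : ∀ x : σ, HasSum (fun y => if y = x then 0 else q x y) (-(q x x)))
    (hq_fin : ∀ x : σ, {z : σ | q z x ≠ 0}.Finite)
    (w : σ → ℝ) (hw_nonneg : ∀ x, 0 ≤ w x)
    (hw_norm : ∀ r : ℝ, (truncSet w r).Finite)
    (c : ℝ) (hP : (statSet q w c).Nonempty)
    (lb ub : ℕ → σ → ℝ)
    (hlb : ∀ r : ℕ, lb r = (truncSet w (r : ℝ)).indicator fun x =>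
      sInf {t : ℝ | ∃ ρ ∈ truncPolytope q w c (r : ℝ), t = ρ x})
    (hub : ∀ r : ℕ, ub r = (truncSet w (r : ℝ)).indicator fun x =>
      sSup {t : ℝ | ∃ ρ ∈ truncPolytope q w c (r : ℝ), t = ρ x})
    (π : σ → ℝ) (hπ : π ∈ statSet q w c) (r : ℕ) (hr : 1 ≤ r) :
    (∀ x, lb r x ≤ π x) ∧
    (∀ x ∈ truncSet w (r : ℝ), π x ≤ ub r x) ∧
    tvDist (lb r) π = 1 - ∑' x, lb r x ∧
    tvDist (ub r) π =
      max ((∑' x, ub r x) - 1 + ∑' x : ↥(truncSet w (r : ℝ))ᶜ, π x)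
        (∑' x : ↥(truncSet w (r : ℝ))ᶜ, π x) ∧
    tvDist (ub r) π ≤ max ((∑' x, ub r x) - 1 + c / r) (c / r) :=
  distribution_bounds_general q w hw_nonneg hw_norm c lb ub hlb hub π hπ r hr
end

section
/- (Corollary on distribution bounds, part (ii).) Let Q be a rate matrix on a countable state space S such that {z ∈ S : q(z,x) ≠ 0} is finite for every x ∈ S, let w be norm-like, and suppose P_{w,c} = {π} is a singleton. Define l^r(x) := inf{π^r(x) : π^r ∈ P^r_{w,c}} and u^r(x) := sup{π^r(x) : π^r ∈ P^r_{w,c}} for x ∈ S_r, and l^r(x) := u^r(x) := 0 for x ∉ S_r. Then u^r converges pointwise to π (lim_{r→∞} u^r(x) = π(x) for every x ∈ S) and l^r converges to π in total variation as r → ∞ (equivalently, lim_{r→∞} (1 − ∑_{x∈S_r} l^r(x)) = 0). -/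
open scoped Classical

open Filter

/-!
Every `ρ ∈ P^r_{w,c}` is a sub-probability vector with `∑ w ρ ≤ c`, so by Markov's inequality
at most `c / R` of its mass lies outside `S_R`: the truncated problems are uniformly tight.
Hence, along any sequence `r_k → ∞`, a pointwise limit of `ρ_k ∈ P^{r_k}_{w,c}` (one exists
along a subsequence by Tychonoff) keeps total mass one, satisfies the moment bound and every
stationary equation (each involves finitely many states, which eventually lie in `N_{r_k}`),
so it is the unique element `π` of `P_{w,c}`. Thus `ρ(x) → π(x)` uniformly over `P^r_{w,c}`,
which gives the pointwise convergence of `u^r` and `l^r`; since `0 ≤ l^r ≤ π`, dominated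
convergence upgrades the latter to convergence in total variation.
-/

open Topology

section Summation

variable {σ : Type*}

theorem tsum_le_tsum_indicator_add_div {w f : σ → ℝ} {s : Set σ} {B R : ℝ} (hR : 0 < R)
    (hs : ∀ x ∉ s, R ≤ w x) (hw : ∀ x, 0 ≤ w x) (hf : ∀ x, 0 ≤ f x) (hfs : Summable f)
    (hwf : Summable fun x => w x * f x) (hB : ∑' x, w x * f x ≤ B) :
    ∑' x, f x ≤ ∑' x, s.indicator f x + B / R := by
  have hpoint : ∀ x, f x ≤ s.indicator f x + w x * f x / R := by
    intro x
    by_cases hx : x ∈ s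
    · rw [Set.indicator_of_mem hx]
      have := div_nonneg (mul_nonneg (hw x) (hf x)) hR.le
      linarith
    · rw [Set.indicator_of_notMem hx, zero_add, le_div_iff₀ hR, mul_comm]
      exact mul_le_mul_of_nonneg_right (hs x hx) (hf x)
  calc ∑' x, f x ≤ ∑' x, (s.indicator f x + w x * f x / R) :=
        hfs.tsum_le_tsum hpoint ((hfs.indicator s).add (hwf.div_const R))
    _ = ∑' x, s.indicator f x + (∑' x, w x * f x) / R := by
        rw [(hfs.indicator s).tsum_add (hwf.div_const R), tsum_div_const]
    _ ≤ ∑' x, s.indicator f x + B / R := by gcongr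

theorem summable_and_tsum_le_of_tendsto {ι : Type*} {l : Filter ι} [l.NeBot]
    {f : ι → σ → ℝ} {g : σ → ℝ} {B : ℝ} (hf : ∀ i x, 0 ≤ f i x) (hfs : ∀ i, Summable (f i))
    (hB : ∀ i, ∑' x, f i x ≤ B) (hlim : ∀ x, Tendsto (fun i => f i x) l (𝓝 (g x))) :
    Summable g ∧ ∑' x, g x ≤ B := by
  have hg : 0 ≤ g := fun x => ge_of_tendsto' (hlim x) fun i => hf i x
  have hpartial : ∀ u : Finset σ, ∑ x ∈ u, g x ≤ B := fun u =>
    le_of_tendsto' (tendsto_finsetSum u fun x _ => hlim x) fun i =>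
      (Summable.sum_le_tsum u (fun x _ => hf i x) (hfs i)).trans (hB i)
  exact ⟨summable_of_sum_le hg hpartial, Real.tsum_le_of_sum_le hg hpartial⟩

theorem hasSum_mul_zero_of_tendsto {ι : Type*} {l : Filter ι} [l.NeBot]
    {f : ι → σ → ℝ} {g a : σ → ℝ} (ha : {y | a y ≠ 0}.Finite)
    (hlim : ∀ y, Tendsto (fun i => f i y) l (𝓝 (g y)))
    (hzero : ∀ᶠ i in l, ∑' y, f i y * a y = 0) : HasSum (fun y => g y * a y) 0 := by
  have hoff : ∀ h : σ → ℝ, ∀ y ∉ ha.toFinset, h y * a y = 0 := fun h y hy => by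
    rw [Set.Finite.mem_toFinset, Set.mem_ofPred_eq, not_not] at hy
    rw [hy, mul_zero]
  have hfinite : ∀ᶠ i in l, ∑ y ∈ ha.toFinset, f i y * a y = 0 :=
    hzero.mono fun i hi => by rwa [tsum_eq_sum (hoff (f i))] at hi
  have hg : ∑ y ∈ ha.toFinset, g y * a y = 0 :=
    tendsto_nhds_unique (tendsto_finsetSum _ fun y _ => (hlim y).mul_const (a y))
      (tendsto_const_nhds.congr' (hfinite.mono fun _ hi => hi.symm))
  exact hg ▸ hasSum_sum_of_ne_finset_zero (hoff g)

theorem tendsto_tsum_sub_of_tendsto {ι : Type*} {l : Filter ι} {f : ι → σ → ℝ} {g : σ → ℝ}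
    (hg : Summable g) (hf : ∀ i x, f i x ∈ Set.Icc 0 (g x))
    (hlim : ∀ x, Tendsto (fun i => f i x) l (𝓝 (g x))) :
    Tendsto (fun i => ∑' x, (g x - f i x)) l (𝓝 0) := by
  have hdom := tendsto_tsum_of_dominated_convergence (f := fun i x => g x - f i x) hg
    (fun x => by simpa using (hlim x).const_sub (g x))
    (Eventually.of_forall fun i x => by
      rw [Real.norm_eq_abs, abs_of_nonneg (sub_nonneg.2 (hf i x).2)]
      linarith [(hf i x).1])
  rwa [tsum_zero] at hdom

theorem tvDist_le_tsum_sub {ρ π : σ → ℝ} (hle : ∀ x, ρ x ≤ π x) (hρ : Summable ρ)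
    (hπ : Summable π) : tvDist ρ π ≤ ∑' x, (π x - ρ x) := by
  have hnonneg : ∀ x, 0 ≤ π x - ρ x := fun x => sub_nonneg.2 (hle x)
  refine Real.iSup_le (fun A => ?_) (tsum_nonneg hnonneg)
  rw [← abs_neg, ← tsum_neg]
  simp_rw [neg_sub]
  rw [abs_of_nonneg (tsum_nonneg fun x : A => hnonneg x)]
  exact Summable.tsum_subtype_le (fun x => π x - ρ x) A hnonneg (hπ.sub hρ)

end Summation

section Extrema

variable {ι : Type*} {l : Filter ι} {s : ι → Set ℝ} {a : ℝ}

theorem tendsto_csSup_of_forall_abs_sub_le (hmem : ∀ᶠ i in l, a ∈ s i)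
    (hclose : ∀ ε > 0, ∀ᶠ i in l, ∀ t ∈ s i, |t - a| ≤ ε) :
    Tendsto (fun i => sSup (s i)) l (𝓝 a) := by
  refine Metric.tendsto_nhds.2 fun ε hε => ?_
  filter_upwards [hmem, hclose (ε / 2) (half_pos hε)] with i ha hi
  have hbdd : ∀ t ∈ s i, t ≤ a + ε / 2 := fun t ht => by linarith [(abs_le.1 (hi t ht)).2]
  have hle := csSup_le ⟨a, ha⟩ hbdd
  have hge := le_csSup ⟨a + ε / 2, hbdd⟩ ha
  rw [Real.dist_eq, abs_lt]
  constructor <;> linarith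

theorem tendsto_csInf_of_forall_abs_sub_le (hmem : ∀ᶠ i in l, a ∈ s i)
    (hclose : ∀ ε > 0, ∀ᶠ i in l, ∀ t ∈ s i, |t - a| ≤ ε) :
    Tendsto (fun i => sInf (s i)) l (𝓝 a) := by
  refine Metric.tendsto_nhds.2 fun ε hε => ?_
  filter_upwards [hmem, hclose (ε / 2) (half_pos hε)] with i ha hi
  have hbdd : ∀ t ∈ s i, a - ε / 2 ≤ t := fun t ht => by linarith [(abs_le.1 (hi t ht)).1]
  have hge := le_csInf ⟨a, ha⟩ hbdd
  have hle := csInf_le ⟨a - ε / 2, hbdd⟩ ha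
  rw [Real.dist_eq, abs_lt]
  constructor <;> linarith

end Extrema

section Truncation

variable {σ : Type*} {q : σ → σ → ℝ} {w : σ → ℝ} {c r : ℝ} {ρ : σ → ℝ}

theorem summable_mul_of_eq_zero_off_truncSet (hw : (truncSet w r).Finite)
    (hρ : ∀ x, ¬ w x < r → ρ x = 0) (f : σ → ℝ) : Summable fun x => f x * ρ x :=
  summable_of_hasFiniteSupport <| hw.subset fun x hx => by
    by_contra hxr
    exact hx (by simp [hρ x hxr])

theorem summable_of_eq_zero_off_truncSet (hw : (truncSet w r).Finite)
    (hρ : ∀ x, ¬ w x < r → ρ x = 0) : Summable ρ := by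
  simpa using summable_mul_of_eq_zero_off_truncSet hw hρ 1

theorem mem_Icc_of_mem_truncPolytope (hw : (truncSet w r).Finite)
    (hρ : ρ ∈ truncPolytope q w c r) (x : σ) : ρ x ∈ Set.Icc 0 1 :=
  ⟨hρ.1 x, ((summable_of_eq_zero_off_truncSet hw hρ.2.1).le_tsum x fun y _ => hρ.1 y).trans
    hρ.2.2.2.2.1⟩

theorem one_sub_le_sum_truncSet_of_mem_truncPolytope (hw_nonneg : ∀ x, 0 ≤ w x)
    (hw : (truncSet w r).Finite) (hρ : ρ ∈ truncPolytope q w c r) {R : ℝ} (hR : 0 < R)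
    (hwR : (truncSet w R).Finite) : 1 - c / r - c / R ≤ ∑ x ∈ hwR.toFinset, ρ x := by
  have hmarkov := tsum_le_tsum_indicator_add_div (s := truncSet w R) hR
    (fun x hx => not_lt.1 hx) hw_nonneg hρ.1 (summable_of_eq_zero_off_truncSet hw hρ.2.1)
    (summable_mul_of_eq_zero_off_truncSet hw hρ.2.1 w) hρ.2.2.2.2.2
  rw [← hwR.coe_toFinset, ← sum_eq_tsum_indicator] at hmarkov
  linarith [hρ.2.2.2.1]

theorem indicator_mem_truncPolytope (hw_nonneg : ∀ x, 0 ≤ w x) (hw : (truncSet w r).Finite)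
    {π : σ → ℝ} (hπ : π ∈ statSet q w c) (hr : 0 < r) :
    (truncSet w r).indicator π ∈ truncPolytope q w c r := by
  obtain ⟨hπ0, hπ1, hπstat, hπw, hπc⟩ := hπ
  have hle : ∀ x, (truncSet w r).indicator π x ≤ π x :=
    Set.indicator_le_self' fun x _ => hπ0 x
  have hzero : ∀ x, ¬ w x < r → (truncSet w r).indicator π x = 0 := fun x hx =>
    Set.indicator_of_notMem (s := truncSet w r) hx π
  refine ⟨Set.indicator_nonneg fun x _ => hπ0 x, hzero, fun x hx => ?_, ?_, ?_, ?_⟩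
  · -- the equation at `x ∈ N_r` only involves states of `S_r`, where the indicator is `π`
    rw [← (hπstat x).tsum_eq]
    refine tsum_congr fun y => ?_
    by_cases hq : q y x = 0
    · simp [hq]
    · rw [Set.indicator_of_mem (s := truncSet w r) (hx.2 y hq)]
  · have hmarkov := tsum_le_tsum_indicator_add_div (s := truncSet w r) hr
      (fun x hx => not_lt.1 hx) hw_nonneg hπ0 hπ1.summable hπw hπc
    linarith [hπ1.tsum_eq]
  · exact ((summable_of_eq_zero_off_truncSet hw hzero).tsum_le_tsum hle hπ1.summable).trans
      hπ1.tsum_eq.le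
  · exact ((summable_mul_of_eq_zero_off_truncSet hw hzero w).tsum_le_tsum
      (fun x => mul_le_mul_of_nonneg_left (hle x) (hw_nonneg x)) hπw).trans hπc

theorem apply_mem_values_of_mem_truncSet (hw_nonneg : ∀ x, 0 ≤ w x)
    (hw : (truncSet w r).Finite) {π : σ → ℝ} (hπ : π ∈ statSet q w c) {x : σ}
    (hx : x ∈ truncSet w r) : π x ∈ {t : ℝ | ∃ ρ ∈ truncPolytope q w c r, t = ρ x} :=
  ⟨_, indicator_mem_truncPolytope hw_nonneg hw hπ ((hw_nonneg x).trans_lt hx),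
    (Set.indicator_of_mem hx π).symm⟩

theorem indicator_sInf_values_mem_Icc (hw_nonneg : ∀ x, 0 ≤ w x)
    (hw : (truncSet w r).Finite) {π : σ → ℝ} (hπ : π ∈ statSet q w c) (x : σ) :
    (truncSet w r).indicator (fun x => sInf {t : ℝ | ∃ ρ ∈ truncPolytope q w c r, t = ρ x}) x ∈
      Set.Icc 0 (π x) := by
  have hbdd : ∀ t ∈ {t : ℝ | ∃ ρ ∈ truncPolytope q w c r, t = ρ x}, 0 ≤ t := by
    rintro t ⟨ρ, hρ, rfl⟩
    exact hρ.1 x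
  by_cases hx : x ∈ truncSet w r
  · rw [Set.indicator_of_mem hx]
    exact ⟨Real.sInf_nonneg hbdd,
      csInf_le ⟨0, hbdd⟩ (apply_mem_values_of_mem_truncSet hw_nonneg hw hπ hx)⟩
  · rw [Set.indicator_of_notMem hx]
    exact ⟨le_rfl, hπ.1 x⟩

end Truncation

section Limits

variable {σ : Type*} {q : σ → σ → ℝ} {w : σ → ℝ} {c : ℝ}

theorem eventually_mem_eqStates {ι : Type*} {l : Filter ι} {r : ι → ℝ} (hr : Tendsto r l atTop)
    {x : σ} (hx : {z | q z x ≠ 0}.Finite) : ∀ᶠ i in l, x ∈ eqStates q w (r i) := by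
  obtain ⟨M, hM⟩ := ((hx.insert x).image w).bddAbove
  filter_upwards [hr.eventually_gt_atTop M] with i hi
  exact ⟨(hM ⟨x, Set.mem_insert x _, rfl⟩).trans_lt hi,
    fun z hz => (hM ⟨z, Set.mem_insert_of_mem x hz, rfl⟩).trans_lt hi⟩

theorem mem_statSet_of_tendsto {ι : Type*} {l : Filter ι} [l.NeBot] {r : ι → ℝ}
    {ρs : ι → σ → ℝ} {ρ : σ → ℝ} (hq_fin : ∀ x, {z | q z x ≠ 0}.Finite)
    (hw_nonneg : ∀ x, 0 ≤ w x) (hw_norm : ∀ r, (truncSet w r).Finite)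
    (hr : Tendsto r l atTop) (hρs : ∀ i, ρs i ∈ truncPolytope q w c (r i))
    (hlim : ∀ x, Tendsto (fun i => ρs i x) l (𝓝 (ρ x))) : ρ ∈ statSet q w c := by
  have hρ0 : ∀ x, 0 ≤ ρ x := fun x => ge_of_tendsto' (hlim x) fun i => (hρs i).1 x
  obtain ⟨hρ, hmass_le⟩ := summable_and_tsum_le_of_tendsto (fun i x => (hρs i).1 x)
    (fun i => summable_of_eq_zero_off_truncSet (hw_norm _) (hρs i).2.1)
    (fun i => (hρs i).2.2.2.2.1) hlim
  obtain ⟨hwρ, hmoment⟩ := summable_and_tsum_le_of_tendsto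
    (fun i x => mul_nonneg (hw_nonneg x) ((hρs i).1 x))
    (fun i => summable_mul_of_eq_zero_off_truncSet (hw_norm _) (hρs i).2.1 w)
    (fun i => (hρs i).2.2.2.2.2) fun x => (hlim x).const_mul (w x)
  -- no mass escapes to infinity: the tightness bound passes to the limit on each finite `S_R`
  have hmass_ge : ∀ R : ℕ, 0 < R → 1 - c / R ≤ ∑' x, ρ x := by
    intro R hR
    have hRpos : (0 : ℝ) < R := Nat.cast_pos.2 hR
    have hlower : Tendsto (fun i => 1 - c / r i - c / R) l (𝓝 (1 - 0 - c / R)) :=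
      (tendsto_const_nhds.sub (tendsto_const_nhds.div_atTop hr)).sub tendsto_const_nhds
    calc 1 - c / R = 1 - 0 - c / R := by ring
      _ ≤ ∑ x ∈ (hw_norm R).toFinset, ρ x :=
          le_of_tendsto_of_tendsto' hlower (tendsto_finsetSum _ fun x _ => hlim x) fun i =>
            one_sub_le_sum_truncSet_of_mem_truncPolytope hw_nonneg (hw_norm _) (hρs i) hRpos _
      _ ≤ ∑' x, ρ x := Summable.sum_le_tsum _ (fun x _ => hρ0 x) hρ
  have hmass : ∑' x, ρ x = 1 := by
    refine le_antisymm hmass_le (le_of_tendsto ?_ ((eventually_gt_atTop 0).mono hmass_ge))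
    simpa using tendsto_const_nhds.sub (tendsto_const_div_atTop_nhds_zero_nat c)
  refine ⟨hρ0, hmass ▸ hρ.hasSum, fun x => ?_, hwρ, hmoment⟩
  exact hasSum_mul_zero_of_tendsto (hq_fin x) hlim
    ((eventually_mem_eqStates hr (hq_fin x)).mono fun i hi => (hρs i).2.2.1 x hi)

theorem eventually_forall_mem_truncPolytope_abs_sub_le [Countable σ]
    (hq_fin : ∀ x, {z | q z x ≠ 0}.Finite) (hw_nonneg : ∀ x, 0 ≤ w x)
    (hw_norm : ∀ r, (truncSet w r).Finite) {π : σ → ℝ} (hsingle : statSet q w c = {π})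
    (x : σ) {ε : ℝ} (hε : 0 < ε) :
    ∀ᶠ n : ℕ in atTop, ∀ ρ ∈ truncPolytope q w c n, |ρ x - π x| ≤ ε := by
  by_contra hfar
  simp only [not_eventually, not_forall, not_le, exists_prop] at hfar
  obtain ⟨u, hu, hbad⟩ := extraction_of_frequently_atTop hfar
  choose ρs hρs hfar using hbad
  obtain ⟨ρ, -, φ, hφ, hlim⟩ := (isCompact_univ_pi fun _ : σ => isCompact_Icc).tendsto_subseq
    fun k => Set.mem_univ_pi.2 (mem_Icc_of_mem_truncPolytope (hw_norm _) (hρs k))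
  have hlim' : ∀ y, Tendsto (fun k => ρs (φ k) y) atTop (𝓝 (ρ y)) := tendsto_pi_nhds.1 hlim
  have hr : Tendsto (fun k => (u (φ k) : ℝ)) atTop atTop :=
    tendsto_natCast_atTop_atTop.comp (hu.comp hφ).tendsto_atTop
  have hρπ : ρ = π := by
    rw [← Set.mem_singleton_iff, ← hsingle]
    exact mem_statSet_of_tendsto hq_fin hw_nonneg hw_norm hr (fun k => hρs (φ k)) hlim'
  have hgap : ε ≤ |ρ x - π x| :=
    ge_of_tendsto' (((hlim' x).sub_const (π x)).abs) fun k => (hfar (φ k)).le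
  rw [hρπ, sub_self, abs_zero] at hgap
  exact hε.not_ge hgap

end Limits

theorem distribution_bounds_converge_general
    {σ : Type*} [Countable σ] (q : σ → σ → ℝ)
    (hq_fin : ∀ x : σ, {z : σ | q z x ≠ 0}.Finite)
    (w : σ → ℝ) (hw_nonneg : ∀ x, 0 ≤ w x)
    (hw_norm : ∀ r : ℝ, (truncSet w r).Finite)
    (c : ℝ)
    (lb ub : ℕ → σ → ℝ)
    (hlb : ∀ r : ℕ, lb r = (truncSet w (r : ℝ)).indicator fun x =>
      sInf {t : ℝ | ∃ ρ ∈ truncPolytope q w c (r : ℝ), t = ρ x})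
    (hub : ∀ r : ℕ, ub r = (truncSet w (r : ℝ)).indicator fun x =>
      sSup {t : ℝ | ∃ ρ ∈ truncPolytope q w c (r : ℝ), t = ρ x})
    (π : σ → ℝ) (hsingle : statSet q w c = {π}) :
    (∀ x, Tendsto (fun r : ℕ => ub r x) atTop (nhds (π x))) ∧
    Tendsto (fun r : ℕ => tvDist (lb r) π) atTop (nhds 0) ∧
    Tendsto (fun r : ℕ => 1 - ∑' x, lb r x) atTop (nhds 0) := by
  have hπ : π ∈ statSet q w c := hsingle ▸ Set.mem_singleton π
  have hlarge : ∀ x, ∀ᶠ n : ℕ in atTop, x ∈ truncSet w n := fun x =>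
    tendsto_natCast_atTop_atTop.eventually_gt_atTop (w x)
  have hattained : ∀ x, ∀ᶠ n : ℕ in atTop, π x ∈ {t : ℝ | ∃ ρ ∈ truncPolytope q w c n, t = ρ x} :=
    fun x => (hlarge x).mono fun n => apply_mem_values_of_mem_truncSet hw_nonneg (hw_norm n) hπ
  have hclose : ∀ x, ∀ ε > 0, ∀ᶠ n : ℕ in atTop,
      ∀ t ∈ {t : ℝ | ∃ ρ ∈ truncPolytope q w c n, t = ρ x}, |t - π x| ≤ ε := fun x ε hε =>
    (eventually_forall_mem_truncPolytope_abs_sub_le hq_fin hw_nonneg hw_norm hsingle x hε).mono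
      fun n hn => by rintro t ⟨ρ, hρ, rfl⟩; exact hn ρ hρ
  have hub_lim : ∀ x, Tendsto (fun n : ℕ => ub n x) atTop (𝓝 (π x)) := fun x =>
    (tendsto_csSup_of_forall_abs_sub_le (hattained x) (hclose x)).congr' <|
      (hlarge x).mono fun n hn => by dsimp only; rw [hub, Set.indicator_of_mem hn]
  have hlb_lim : ∀ x, Tendsto (fun n : ℕ => lb n x) atTop (𝓝 (π x)) := fun x =>
    (tendsto_csInf_of_forall_abs_sub_le (hattained x) (hclose x)).congr' <|
      (hlarge x).mono fun n hn => by dsimp only; rw [hlb, Set.indicator_of_mem hn]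
  have hlb_mem : ∀ n x, lb n x ∈ Set.Icc 0 (π x) := fun n x =>
    hlb n ▸ indicator_sInf_values_mem_Icc hw_nonneg (hw_norm n) hπ x
  have hlb_sum : ∀ n, Summable (lb n) := fun n =>
    summable_of_eq_zero_off_truncSet (hw_norm n) fun x hx => by
      rw [hlb, Set.indicator_of_notMem (s := truncSet w n) hx]
  have hdefect : ∀ n, 1 - ∑' x, lb n x = ∑' x, (π x - lb n x) := fun n => by
    rw [hπ.2.1.summable.tsum_sub (hlb_sum n), hπ.2.1.tsum_eq]
  have hdefect_lim := tendsto_tsum_sub_of_tendsto hπ.2.1.summable hlb_mem hlb_lim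
  refine ⟨hub_lim, squeeze_zero (fun n => Real.iSup_nonneg fun A => abs_nonneg _)
    (fun n => tvDist_le_tsum_sub (fun x => (hlb_mem n x).2) (hlb_sum n) hπ.2.1.summable)
    hdefect_lim, ?_⟩
  simpa only [hdefect] using hdefect_lim

/-- **Statement 13** (corollary on distribution bounds, part (ii)).
If `P_{w,c} = {π}` is a singleton, then the upper bounds `u^r` converge pointwise to
`π` and the lower bounds `l^r` converge to `π` in total variation as `r → ∞`
(equivalently, `1 - ∑_{x ∈ S_r} l^r(x) → 0`). -/
theorem distribution_bounds_converge
    {σ : Type*} [Countable σ] (q : σ → σ → ℝ)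
    (hq_offdiag : ∀ x y : σ, x ≠ y → 0 ≤ q x y)
    (hq_row : ∀ x : σ, HasSum (fun y => if y = x then 0 else q x y) (-(q x x)))
    (hq_fin : ∀ x : σ, {z : σ | q z x ≠ 0}.Finite)
    (w : σ → ℝ) (hw_nonneg : ∀ x, 0 ≤ w x)
    (hw_norm : ∀ r : ℝ, (truncSet w r).Finite)
    (c : ℝ)
    (lb ub : ℕ → σ → ℝ)
    (hlb : ∀ r : ℕ, lb r = (truncSet w (r : ℝ)).indicator fun x =>
      sInf {t : ℝ | ∃ ρ ∈ truncPolytope q w c (r : ℝ), t = ρ x})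
    (hub : ∀ r : ℕ, ub r = (truncSet w (r : ℝ)).indicator fun x =>
      sSup {t : ℝ | ∃ ρ ∈ truncPolytope q w c (r : ℝ), t = ρ x})
    (π : σ → ℝ) (hsingle : statSet q w c = {π}) :
    (∀ x, Tendsto (fun r : ℕ => ub r x) atTop (nhds (π x))) ∧
    Tendsto (fun r : ℕ => tvDist (lb r) π) atTop (nhds 0) ∧
    Tendsto (fun r : ℕ => 1 - ∑' x, lb r x) atTop (nhds 0) :=
  distribution_bounds_converge_general q hq_fin w hw_nonneg hw_norm c lb ub hlb hub π hsingle
end
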